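/- arXiv:1106.0072 — 7 statements merged into one kernel-verified Lean document; each statement's English description precedes it below -/
import Mathlib

section
/- Let R be a commutative ring with identity such that the co-maximal graph Ω(R) is a split graph, with vertex partition V(Ω(R)) = K ∪ D where K ∩ D = ∅, the induced subgraph on K is complete, and D is an independent set. Then: (1) for every proper ideal I of R, the set I ∩ K has at most one element; (2) for any two distinct maximal ideals m and n of R, every element of m ∩ n ∩ K is zero. -/
universe u

/-- The co-maximal graph `Ω(R)`: vertices are the elements of `R`, with distinct `x`, `y`
adjacent iff `Rx + Ry = R`. -/
def comaximalGraph (R : Type*) [CommRing R] : SimpleGraph R where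
  Adj x y := x ≠ y ∧ Ideal.span {x} ⊔ Ideal.span {y} = ⊤
  symm := ⟨fun _ _ ⟨h1, h2⟩ => ⟨h1.symm, by rwa [sup_comm]⟩⟩
  loopless := ⟨fun _ ⟨h, _⟩ => h rfl⟩

/-- Vertices of `Γ(R)`: the elements of `R \ (U(R) ∪ J(R))`. -/
def GammaVert (R : Type*) [CommRing R] : Type _ :=
  {x : R // ¬IsUnit x ∧ x ∉ (⊥ : Ideal R).jacobson}

/-- The graph `Γ(R)` induced on `R \ (U(R) ∪ J(R))`: distinct vertices `x`, `y` are
adjacent iff `Rx + Ry = R`. -/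
def Gamma (R : Type*) [CommRing R] : SimpleGraph (GammaVert R) where
  Adj a b := a ≠ b ∧ Ideal.span {a.1} ⊔ Ideal.span {b.1} = ⊤
  symm := ⟨fun _ _ ⟨h1, h2⟩ => ⟨h1.symm, by rwa [sup_comm]⟩⟩
  loopless := ⟨fun _ ⟨h, _⟩ => h rfl⟩

/-- Vertices of `Γ_r(R)`: the principal ideals `Rx` for `x ∈ R \ (U(R) ∪ J(R))`. -/
def GammaRVert (R : Type*) [CommRing R] : Type _ :=
  {I : Ideal R // ∃ x : R, ¬IsUnit x ∧ x ∉ (⊥ : Ideal R).jacobson ∧ I = Ideal.span {x}}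

/-- The graph `Γ_r(R)` on `{Rx | x ∈ R \ (U(R) ∪ J(R))}`: distinct vertices `Rx`, `Ry`
are adjacent iff `Rx + Ry = R`. -/
def GammaR (R : Type*) [CommRing R] : SimpleGraph (GammaRVert R) where
  Adj I J := I ≠ J ∧ I.1 ⊔ J.1 = ⊤
  symm := ⟨fun _ _ ⟨h1, h2⟩ => ⟨h1.symm, by rwa [sup_comm]⟩⟩
  loopless := ⟨fun _ ⟨h, _⟩ => h rfl⟩

/-- A simple graph is a split graph if its vertex set is the disjoint union of a set
inducing a complete graph and an independent set. -/
def IsSplitGraph {V : Type*} (G : SimpleGraph V) : Prop :=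
  ∃ K D : Set V, K ∪ D = Set.univ ∧ K ∩ D = ∅ ∧
    (∀ x ∈ K, ∀ y ∈ K, x ≠ y → G.Adj x y) ∧
    (∀ x ∈ D, ∀ y ∈ D, ¬G.Adj x y)

/-- A simple graph is bipartite if its vertex set is the disjoint union of two sets
such that every edge goes between them. -/
def IsBipartiteGraph {V : Type*} (G : SimpleGraph V) : Prop :=
  ∃ A B : Set V, A ∪ B = Set.univ ∧ A ∩ B = ∅ ∧
    ∀ x y, G.Adj x y → (x ∈ A ∧ y ∈ B) ∨ (x ∈ B ∧ y ∈ A)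

/-- A simple graph is complete bipartite if its vertex set is the disjoint union of two
sets such that two vertices are adjacent iff they lie in different parts. -/
def IsCompleteBipartiteGraph {V : Type*} (G : SimpleGraph V) : Prop :=
  ∃ A B : Set V, A ∪ B = Set.univ ∧ A ∩ B = ∅ ∧
    ∀ x y, G.Adj x y ↔ ((x ∈ A ∧ y ∈ B) ∨ (x ∈ B ∧ y ∈ A))

/-! In `Ω(R)` two elements of a proper ideal are never adjacent, so the clique `K` meets each
proper ideal at most once. For distinct maximal ideals `m`, `n` write `1 = a + b` with `a ∈ m`,
`b ∈ n`; then `a` and `b` are adjacent, so one of them, say `a`, lies in `K`. An `x ∈ m ∩ n ∩ K`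
would then equal `a` (both lie in `m ∩ K`), forcing `1 = a + b ∈ n`. So `m ∩ n ∩ K` is empty. -/

theorem SimpleGraph.Adj.mem_or_mem_of_union_eq_univ {V : Type*} {G : SimpleGraph V}
    {K D : Set V} (hcover : K ∪ D = Set.univ) (hD : ∀ x ∈ D, ∀ y ∈ D, ¬G.Adj x y) {a b : V}
    (h : G.Adj a b) : a ∈ K ∨ b ∈ K := by
  by_contra! hab
  have hmem : ∀ v, v ∉ K → v ∈ D := fun v hv =>
    ((Set.eq_univ_iff_forall.mp hcover v).resolve_left hv)
  exact hD a (hmem a hab.1) b (hmem b hab.2) h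

namespace comaximalGraph

variable {R : Type*} [CommRing R]

theorem adj_iff {x y : R} : (comaximalGraph R).Adj x y ↔ x ≠ y ∧ IsCoprime x y := by
  rw [← Ideal.isCoprime_span_singleton_iff, Ideal.isCoprime_iff_sup_eq]
  rfl

theorem eq_top_of_adj_of_mem {I : Ideal R} {x y : R} (h : (comaximalGraph R).Adj x y)
    (hx : x ∈ I) (hy : y ∈ I) : I = ⊤ :=
  top_le_iff.mp <| h.2 ▸ sup_le ((Ideal.span_singleton_le_iff_mem I).2 hx)
    ((Ideal.span_singleton_le_iff_mem I).2 hy)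

theorem subsingleton_ideal_inter_of_isClique {K : Set R} (hK : (comaximalGraph R).IsClique K)
    {I : Ideal R} (hI : I ≠ ⊤) : ((I : Set R) ∩ K).Subsingleton := by
  intro x hx y hy
  by_contra hxy
  exact hI (eq_top_of_adj_of_mem (hK hx.2 hy.2 hxy) hx.1 hy.1)

theorem inter_inter_eq_empty_of_add_eq_one {K : Set R} (hK : (comaximalGraph R).IsClique K)
    {p q : Ideal R} (hp : p ≠ ⊤) (hq : q ≠ ⊤) {c d : R} (hc : c ∈ p) (hd : d ∈ q)
    (hcd : c + d = 1) (hcK : c ∈ K) : (p : Set R) ∩ q ∩ K = ∅ := by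
  refine Set.eq_empty_of_forall_notMem fun x hx => hq ?_
  have hcx : c = x := subsingleton_ideal_inter_of_isClique hK hp ⟨hc, hcK⟩ ⟨hx.1.1, hx.2⟩
  exact (Ideal.eq_top_iff_one q).mpr (hcd ▸ q.add_mem (hcx ▸ hx.1.2) hd)

theorem maximal_inter_maximal_inter_eq_empty {K : Set R} (hK : (comaximalGraph R).IsClique K)
    (hcover : ∀ a b, (comaximalGraph R).Adj a b → a ∈ K ∨ b ∈ K) {m n : Ideal R}
    (hm : m.IsMaximal) (hn : n.IsMaximal) (hmn : m ≠ n) :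
    (m : Set R) ∩ n ∩ K = ∅ := by
  obtain ⟨a, ha, b, hb, hab⟩ :=
    Ideal.isCoprime_iff_exists.mp (Ideal.isCoprime_iff_sup_eq.mpr (hm.coprime_of_ne hn hmn))
  have hne : a ≠ b := fun h =>
    hm.ne_top ((Ideal.eq_top_iff_one m).mpr (hab ▸ m.add_mem ha (h ▸ ha)))
  have hadj : (comaximalGraph R).Adj a b :=
    adj_iff.mpr ⟨hne, ⟨1, 1, by rw [one_mul, one_mul, hab]⟩⟩
  rcases hcover a b hadj with haK | hbK
  · exact inter_inter_eq_empty_of_add_eq_one hK hm.ne_top hn.ne_top ha hb hab haK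
  · rw [Set.inter_comm (m : Set R)]
    exact inter_inter_eq_empty_of_add_eq_one hK hn.ne_top hm.ne_top hb ha
      (add_comm a b ▸ hab) hbK

end comaximalGraph

theorem comaximal_split_ideal_meets_clique_general {R : Type*} [CommRing R] (K D : Set R)
    (hcover : K ∪ D = Set.univ)
    (hK : ∀ x ∈ K, ∀ y ∈ K, x ≠ y → (comaximalGraph R).Adj x y)
    (hD : ∀ x ∈ D, ∀ y ∈ D, ¬(comaximalGraph R).Adj x y) :
    (∀ I : Ideal R, I ≠ ⊤ → ∀ x ∈ (I : Set R) ∩ K, ∀ y ∈ (I : Set R) ∩ K, x = y) ∧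
    (∀ m n : Ideal R, m.IsMaximal → n.IsMaximal → m ≠ n →
      ∀ x ∈ (m : Set R) ∩ (n : Set R) ∩ K, x = 0) := by
  have hclique : (comaximalGraph R).IsClique K := hK
  refine ⟨fun I hI => comaximalGraph.subsingleton_ideal_inter_of_isClique hclique hI,
    fun m n hm hn hmn x hx => ?_⟩
  rw [comaximalGraph.maximal_inter_maximal_inter_eq_empty hclique
    (fun _ _ => SimpleGraph.Adj.mem_or_mem_of_union_eq_univ hcover hD) hm hn hmn] at hx
  exact hx.elim

/-- Lemma 2.1 (1),(2): if the co-maximal graph of `R` is split with clique part `K` and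
independent part `D`, then every proper ideal meets `K` in at most one element, and for
distinct maximal ideals `m`, `n`, every element of `m ∩ n ∩ K` is zero. -/
theorem comaximal_split_ideal_meets_clique {R : Type*} [CommRing R] (K D : Set R)
    (hcover : K ∪ D = Set.univ) (hdisj : K ∩ D = ∅)
    (hK : ∀ x ∈ K, ∀ y ∈ K, x ≠ y → (comaximalGraph R).Adj x y)
    (hD : ∀ x ∈ D, ∀ y ∈ D, ¬(comaximalGraph R).Adj x y) :
    (∀ I : Ideal R, I ≠ ⊤ → ∀ x ∈ (I : Set R) ∩ K, ∀ y ∈ (I : Set R) ∩ K, x = y) ∧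
    (∀ m n : Ideal R, m.IsMaximal → n.IsMaximal → m ≠ n →
      ∀ x ∈ (m : Set R) ∩ (n : Set R) ∩ K, x = 0) :=
  comaximal_split_ideal_meets_clique_general K D hcover hK hD
end

section
/- Let R be a commutative ring with identity that is not a local ring. Then the graph Γ(R) is connected, and the distance between any two vertices of Γ(R) is at most three. -/
universe u

/-!
Every vertex `a` avoids some maximal ideal `M`, and then `M` contains an element `x` with
`Ra + Rx = R`; such an `x` is automatically a vertex (a non-unit, and outside `J(R)` because
`a` is not a unit). If some maximal ideal `P` avoids both `a` and `b`, this applied to `ab`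
and `P` gives a common neighbour. Otherwise every maximal ideal contains `a` or `b`: pick
`M₁ ∌ a` and `M₂ ∌ b`, so `a ∈ M₂`, and a neighbour `x ∈ M₁` of `a` lies outside `M₂`;
then `x` and `b` have a common neighbour in `M₂`, giving the path `a - x - y - b`.
-/

namespace Ideal

variable {R : Type*} [CommRing R]

theorem IsMaximal.exists_mem_isCoprime {M : Ideal R} (hM : M.IsMaximal) {a : R} (ha : a ∉ M) :
    ∃ x ∈ M, IsCoprime a x := by
  obtain ⟨y, x, hxM, hyx⟩ := hM.exists_inv ha
  exact ⟨x, hxM, y, 1, by rw [one_mul, hyx]⟩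

theorem exists_isMaximal_notMem_of_notMem_jacobson_bot {c : R}
    (hc : c ∉ (⊥ : Ideal R).jacobson) : ∃ M : Ideal R, M.IsMaximal ∧ c ∉ M := by
  simp only [jacobson, mem_sInf, not_forall] at hc
  obtain ⟨M, ⟨-, hM⟩, hcM⟩ := hc
  exact ⟨M, hM, hcM⟩

end Ideal

theorem IsCoprime.isUnit_of_mem_jacobson_bot {R : Type*} [CommRing R] {a x : R}
    (h : IsCoprime a x) (hx : x ∈ (⊥ : Ideal R).jacobson) : IsUnit a := by
  obtain ⟨u, v, huv⟩ := h
  have hunit : IsUnit (x * (-v) + 1) := Ideal.mem_jacobson_bot.mp hx (-v)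
  rw [show x * (-v) + 1 = u * a by linear_combination -huv] at hunit
  exact isUnit_of_mul_isUnit_right hunit

namespace Gamma

variable {R : Type*} [CommRing R]

theorem adj_iff {a b : GammaVert R} : (Gamma R).Adj a b ↔ a ≠ b ∧ IsCoprime a.1 b.1 := by
  rw [← Ideal.isCoprime_span_singleton_iff, Ideal.isCoprime_iff_sup_eq]
  rfl

theorem adj_of_isCoprime {M : Ideal R} {a b : GammaVert R} (ha : a.1 ∉ M) (hb : b.1 ∈ M)
    (h : IsCoprime a.1 b.1) : (Gamma R).Adj a b :=
  adj_iff.mpr ⟨fun hab => ha (hab ▸ hb), h⟩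

theorem exists_mem_isCoprime {M : Ideal R} (hM : M.IsMaximal) {a : R} (ha : ¬IsUnit a)
    (haM : a ∉ M) : ∃ x : GammaVert R, x.1 ∈ M ∧ IsCoprime a x.1 := by
  obtain ⟨x, hxM, hax⟩ := hM.exists_mem_isCoprime haM
  exact ⟨⟨x, fun hx => hM.ne_top (M.eq_top_of_isUnit_mem hxM hx),
    fun hx => ha (hax.isUnit_of_mem_jacobson_bot hx)⟩, hxM, hax⟩

theorem exists_adj_adj {P : Ideal R} (hP : P.IsMaximal) {a b : GammaVert R}
    (haP : a.1 ∉ P) (hbP : b.1 ∉ P) :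
    ∃ x : GammaVert R, (Gamma R).Adj a x ∧ (Gamma R).Adj x b := by
  have hab : ¬IsUnit (a.1 * b.1) := fun h => a.2.1 (isUnit_of_mul_isUnit_left h)
  have habP : a.1 * b.1 ∉ P := fun h => (hP.isPrime.mem_or_mem h).elim haP hbP
  obtain ⟨x, hxP, habx⟩ := exists_mem_isCoprime hP hab habP
  exact ⟨x, adj_of_isCoprime haP hxP habx.of_mul_left_left,
    (adj_of_isCoprime hbP hxP habx.of_mul_left_right).symm⟩

theorem exists_walk_length_le_three (a b : GammaVert R) :
    ∃ w : (Gamma R).Walk a b, w.length ≤ 3 := by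
  by_cases hP : ∃ P : Ideal R, P.IsMaximal ∧ a.1 ∉ P ∧ b.1 ∉ P
  · obtain ⟨P, hP, haP, hbP⟩ := hP
    obtain ⟨x, hax, hxb⟩ := exists_adj_adj hP haP hbP
    exact ⟨.cons hax (.cons hxb .nil), by simp⟩
  · push Not at hP
    obtain ⟨M₁, hM₁, haM₁⟩ := Ideal.exists_isMaximal_notMem_of_notMem_jacobson_bot a.2.2
    obtain ⟨M₂, hM₂, hbM₂⟩ := Ideal.exists_isMaximal_notMem_of_notMem_jacobson_bot b.2.2
    have haM₂ : a.1 ∈ M₂ := by_contra fun h => hbM₂ (hP M₂ hM₂ h)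
    obtain ⟨x, hxM₁, hax⟩ := exists_mem_isCoprime hM₁ a.2.1 haM₁
    have hxM₂ : x.1 ∉ M₂ := hM₂.isPrime.notMem_of_isCoprime_of_mem hax haM₂
    obtain ⟨y, hxy, hyb⟩ := exists_adj_adj hM₂ hxM₂ hbM₂
    exact ⟨.cons (adj_of_isCoprime haM₁ hxM₁ hax) (.cons hxy (.cons hyb .nil)), by simp⟩

theorem nonempty_of_not_isLocalRing [Nontrivial R] (h : ¬IsLocalRing R) :
    Nonempty (GammaVert R) := by
  obtain ⟨a, ha, ha'⟩ : ∃ a : R, ¬IsUnit a ∧ ¬IsUnit (1 - a) := by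
    by_contra! hall
    exact h (.of_isUnit_or_isUnit_one_sub_self fun a => or_iff_not_imp_left.mpr (hall a))
  refine ⟨⟨a, ha, fun haJ => ha' ?_⟩⟩
  simpa [sub_eq_add_neg, add_comm] using Ideal.mem_jacobson_bot.mp haJ (-1)

end Gamma

/-- Theorem 3.1: for a non-local commutative ring `R`, the graph `Γ(R)` is connected
with diameter at most three. -/
theorem gamma_connected_dist_le_three (R : Type*) [CommRing R] [Nontrivial R]
    (h : ¬IsLocalRing R) :
    (Gamma R).Connected ∧ ∀ a b : GammaVert R, (Gamma R).dist a b ≤ 3 := by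
  have := Gamma.nonempty_of_not_isLocalRing h
  refine ⟨⟨fun a b => (Gamma.exists_walk_length_le_three a b).choose.reachable⟩, fun a b => ?_⟩
  obtain ⟨w, hw⟩ := Gamma.exists_walk_length_le_three a b
  exact (SimpleGraph.dist_le w).trans hw
end

section
/- Let R be a commutative ring with identity that is not a local ring, and let G = Γ(R). Then the following are equivalent: (1) G is a bipartite graph; (2) G is a complete bipartite graph; (3) R has exactly two maximal ideals; (4) R/J(R) is isomorphic to K₁ × K₂ for some fields K₁ and K₂. -/
/-!
Two elements of `R` are adjacent in `Γ(R)` iff they are coprime, i.e. iff no maximal ideal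
contains both. A vertex is a non-unit outside the Jacobson radical `J`, so it lies in some
maximal ideal and misses another one.

If `m` and `n` are the only maximal ideals, then `J = m ⊓ n`, so every vertex lies in exactly one
of them, and two vertices are adjacent iff they lie in different ones: `Γ(R)` is complete
bipartite. If there is a third maximal ideal, `Γ(R)` contains a triangle, so it is not bipartite.
Finally `J = m ⊓ n` and the Chinese remainder theorem give `R/J ≅ R/m × R/n`; conversely the two
projections of `R → R/J ≅ K₁ × K₂` have distinct maximal kernels with intersection `J`, and a
maximal ideal containing `J` contains, hence equals, one of them.
-/

universe u

section Graph

variable {V : Type*} {G : SimpleGraph V}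

theorem IsBipartiteGraph.not_triangle (hG : IsBipartiteGraph G) (x y z : V) :
    ¬(G.Adj x y ∧ G.Adj y z ∧ G.Adj x z) := by
  obtain ⟨A, B, hcover, hdisj, hadj⟩ := hG
  have hB : ∀ v, v ∈ B ↔ v ∉ A := fun v =>
    ⟨fun hvB hvA => Set.eq_empty_iff_forall_notMem.1 hdisj v ⟨hvA, hvB⟩,
      fun hvA => (Set.eq_univ_iff_forall.1 hcover v).resolve_left hvA⟩
  have hside {a b : V} (h : G.Adj a b) : a ∈ A ↔ b ∉ A := by
    rcases hadj a b h with ⟨ha, hb⟩ | ⟨ha, hb⟩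
    · exact iff_of_true ha ((hB b).1 hb)
    · exact iff_of_false ((hB a).1 ha) (not_not_intro hb)
  rintro ⟨hxy, hyz, hxz⟩
  have hx := hside hxy
  have hy := hside hyz
  have hz := hside hxz
  tauto

theorem IsCompleteBipartiteGraph.isBipartiteGraph (hG : IsCompleteBipartiteGraph G) :
    IsBipartiteGraph G :=
  let ⟨A, B, hcover, hdisj, hadj⟩ := hG
  ⟨A, B, hcover, hdisj, fun x y => (hadj x y).1⟩

end Graph

section Coprime

variable {R : Type*} [CommRing R]

theorem span_singleton_sup_span_singleton_eq_top_iff {x y : R} :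
    Ideal.span {x} ⊔ Ideal.span {y} = ⊤ ↔ IsCoprime x y := by
  rw [← Ideal.isCoprime_iff_sup_eq, Ideal.isCoprime_span_singleton_iff]

theorem isCoprime_iff_forall_isMaximal {x y : R} :
    IsCoprime x y ↔ ∀ p : Ideal R, p.IsMaximal → x ∈ p → y ∉ p := by
  constructor
  · rintro ⟨a, b, hab⟩ p hp hx hy
    exact hp.ne_top ((Ideal.eq_top_iff_one p).2
      (hab ▸ add_mem (p.mul_mem_left a hx) (p.mul_mem_left b hy)))
  · intro h
    rw [← span_singleton_sup_span_singleton_eq_top_iff]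
    by_contra hne
    obtain ⟨p, hp, hle⟩ := Ideal.exists_le_maximal _ hne
    exact h p hp (hle (Ideal.mem_sup_left (Ideal.mem_span_singleton_self x)))
      (hle (Ideal.mem_sup_right (Ideal.mem_span_singleton_self y)))

theorem notMem_jacobson_bot_of_isCoprime {x y : R} (h : IsCoprime x y) (hy : ¬IsUnit y) :
    x ∉ (⊥ : Ideal R).jacobson := by
  obtain ⟨a, b, hab⟩ := h
  intro hx
  have hunit : IsUnit (x * -a + 1) := Ideal.mem_jacobson_bot.1 hx (-a)
  rw [show x * -a + 1 = b * y by linear_combination -hab] at hunit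
  exact hy (isUnit_of_mul_isUnit_right hunit)

theorem jacobson_bot_le_of_isMaximal {p : Ideal R} (hp : p.IsMaximal) :
    (⊥ : Ideal R).jacobson ≤ p :=
  sInf_le ⟨bot_le, hp⟩

/-- The images of `u, v, w` in `R/m₁ × R/m₂ × R/m₃` are `(0,1,1)`, `(1,0,1)`, `(1,1,0)`, and
`v ≡ 1 mod u`, `w ≡ 1 mod uv` make them pairwise coprime in `R` itself. -/
theorem exists_pairwise_isCoprime_of_three_isMaximal {m₁ m₂ m₃ : Ideal R}
    (h₁ : m₁.IsMaximal) (h₂ : m₂.IsMaximal) (h₃ : m₃.IsMaximal)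
    (h₁₂ : m₁ ≠ m₂) (h₁₃ : m₁ ≠ m₃) (h₂₃ : m₂ ≠ m₃) :
    ∃ u ∈ m₁, ∃ v ∈ m₂, ∃ w ∈ m₃, IsCoprime u v ∧ IsCoprime u w ∧ IsCoprime v w := by
  have coprime {p q : Ideal R} (hp : p.IsMaximal) (hq : q.IsMaximal) (hpq : p ≠ q) :
      IsCoprime p q :=
    Ideal.isCoprime_iff_sup_eq.2 (hp.coprime_of_ne hq hpq)
  obtain ⟨i, hi, j, hj, hij⟩ :=
    ((coprime h₁ h₂ h₁₂).mul_right (coprime h₁ h₃ h₁₃)).exists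
  obtain ⟨r, hr, s, hs, hrs⟩ := (coprime h₃ h₂ h₂₃.symm).exists
  refine ⟨i, hi, 1 - i * r, ?_, 1 - i * (1 - i * r), ?_,
    ⟨r, 1, by ring⟩, ⟨1 - i * r, 1, by ring⟩, ⟨i, 1, by ring⟩⟩
  · rw [show 1 - i * r = j + i * s by linear_combination -hij - i * hrs]
    exact add_mem (Ideal.mul_le_left hj) (m₂.mul_mem_left i hs)
  · rw [show 1 - i * (1 - i * r) = j + i * i * r by linear_combination -hij]
    exact add_mem (Ideal.mul_le_right hj) (m₃.mul_mem_left _ hr)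

theorem jacobson_bot_eq_inf_of_forall_isMaximal {m n : Ideal R} (hm : m.IsMaximal)
    (hn : n.IsMaximal) (honly : ∀ p : Ideal R, p.IsMaximal → p = m ∨ p = n) :
    (⊥ : Ideal R).jacobson = m ⊓ n := by
  refine le_antisymm (le_inf (jacobson_bot_le_of_isMaximal hm) (jacobson_bot_le_of_isMaximal hn))
    (le_sInf fun p ⟨_, hp⟩ => ?_)
  rcases honly p hp with rfl | rfl
  exacts [inf_le_left, inf_le_right]

theorem eq_or_eq_of_inf_le_jacobson_bot {m n p : Ideal R} (hm : m.IsMaximal) (hn : n.IsMaximal)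
    (hmn : m ⊓ n ≤ (⊥ : Ideal R).jacobson) (hp : p.IsMaximal) : p = m ∨ p = n :=
  (hp.isPrime.inf_le.1 (hmn.trans (jacobson_bot_le_of_isMaximal hp))).imp
    (fun hle => (hm.eq_of_le hp.ne_top hle).symm) (fun hle => (hn.eq_of_le hp.ne_top hle).symm)

end Coprime

section Gamma

variable {R : Type*} [CommRing R]

theorem gamma_adj_iff {x y : GammaVert R} : (Gamma R).Adj x y ↔ IsCoprime x.1 y.1 := by
  change x ≠ y ∧ _ ↔ _
  rw [span_singleton_sup_span_singleton_eq_top_iff]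
  refine ⟨And.right, fun h => ⟨?_, h⟩⟩
  rintro rfl
  exact x.2.1 (isCoprime_self.1 h)

theorem not_isBipartiteGraph_gamma_of_three_isMaximal {m₁ m₂ m₃ : Ideal R}
    (h₁ : m₁.IsMaximal) (h₂ : m₂.IsMaximal) (h₃ : m₃.IsMaximal)
    (h₁₂ : m₁ ≠ m₂) (h₁₃ : m₁ ≠ m₃) (h₂₃ : m₂ ≠ m₃) :
    ¬IsBipartiteGraph (Gamma R) := by
  obtain ⟨u, hu₁, v, hv₂, w, hw₃, huv, huw, hvw⟩ :=
    exists_pairwise_isCoprime_of_three_isMaximal h₁ h₂ h₃ h₁₂ h₁₃ h₂₃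
  have hu : ¬IsUnit u := coe_subset_nonunits h₁.ne_top hu₁
  have hv : ¬IsUnit v := coe_subset_nonunits h₂.ne_top hv₂
  have hw : ¬IsUnit w := coe_subset_nonunits h₃.ne_top hw₃
  let x : GammaVert R := ⟨u, hu, notMem_jacobson_bot_of_isCoprime huv hv⟩
  let y : GammaVert R := ⟨v, hv, notMem_jacobson_bot_of_isCoprime huv.symm hu⟩
  let z : GammaVert R := ⟨w, hw, notMem_jacobson_bot_of_isCoprime huw.symm hu⟩
  exact fun hG => hG.not_triangle x y z
    ⟨gamma_adj_iff.2 huv, gamma_adj_iff.2 hvw, gamma_adj_iff.2 huw⟩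

theorem isCompleteBipartiteGraph_gamma_of_forall_isMaximal {m n : Ideal R} (hm : m.IsMaximal)
    (hn : n.IsMaximal) (honly : ∀ p : Ideal R, p.IsMaximal → p = m ∨ p = n) :
    IsCompleteBipartiteGraph (Gamma R) := by
  have mem_n_iff (x : GammaVert R) : x.1 ∈ n ↔ x.1 ∉ m := by
    have hJ : ¬(x.1 ∈ m ∧ x.1 ∈ n) := by
      rw [← Ideal.mem_inf, ← jacobson_bot_eq_inf_of_forall_isMaximal hm hn honly]
      exact x.2.2
    obtain ⟨p, hp, hxp⟩ := exists_max_ideal_of_mem_nonunits (mem_nonunits_iff.2 x.2.1)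
    rcases honly p hp with rfl | rfl <;> tauto
  refine ⟨{x | x.1 ∈ m}, {x | x.1 ∉ m}, Set.union_compl_self _, Set.inter_compl_self _,
    fun x y => ?_⟩
  have coprime_iff : IsCoprime x.1 y.1 ↔ (x.1 ∈ m → y.1 ∉ m) ∧ (x.1 ∈ n → y.1 ∉ n) := by
    rw [isCoprime_iff_forall_isMaximal]
    refine ⟨fun h => ⟨h m hm, h n hn⟩, fun h p hp => ?_⟩
    rcases honly p hp with rfl | rfl
    exacts [h.1, h.2]
  rw [gamma_adj_iff, coprime_iff, mem_n_iff x, mem_n_iff y]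
  tauto

end Gamma

section MaximalIdeals

variable {R : Type*} [CommRing R]

theorem exists_isMaximal_ne_of_not_isLocalRing [Nontrivial R] (h : ¬IsLocalRing R) :
    ∃ m n : Ideal R, m.IsMaximal ∧ n.IsMaximal ∧ m ≠ n := by
  obtain ⟨m, hm⟩ := Ideal.exists_maximal R
  by_contra! hne
  exact h (.of_unique_max_ideal ⟨m, hm, fun n hn => hne n m hn hm⟩)

theorem exists_two_isMaximal_of_isBipartiteGraph_gamma [Nontrivial R] (h : ¬IsLocalRing R)
    (hG : IsBipartiteGraph (Gamma R)) :
    ∃ m n : Ideal R, m.IsMaximal ∧ n.IsMaximal ∧ m ≠ n ∧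
      ∀ p : Ideal R, p.IsMaximal → p = m ∨ p = n := by
  obtain ⟨m, n, hm, hn, hmn⟩ := exists_isMaximal_ne_of_not_isLocalRing h
  refine ⟨m, n, hm, hn, hmn, fun p hp => ?_⟩
  by_contra! hp'
  exact not_isBipartiteGraph_gamma_of_three_isMaximal hm hn hp hmn hp'.1.symm hp'.2.symm hG

noncomputable def quotientJacobsonBotEquivProd {m n : Ideal R} (hm : m.IsMaximal)
    (hn : n.IsMaximal) (hmn : m ≠ n) (honly : ∀ p : Ideal R, p.IsMaximal → p = m ∨ p = n) :
    R ⧸ (⊥ : Ideal R).jacobson ≃+* (R ⧸ m) × (R ⧸ n) :=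
  (Ideal.quotEquivOfEq (jacobson_bot_eq_inf_of_forall_isMaximal hm hn honly)).trans
    (Ideal.quotientInfEquivQuotientProd m n
      (Ideal.isCoprime_iff_sup_eq.2 (hm.coprime_of_ne hn hmn)))

theorem exists_two_isMaximal_of_surjective_prod {K₁ K₂ : Type*} [Field K₁] [Field K₂]
    {f : R →+* K₁ × K₂} (hf : Function.Surjective f)
    (hker : RingHom.ker f ≤ (⊥ : Ideal R).jacobson) :
    ∃ m n : Ideal R, m.IsMaximal ∧ n.IsMaximal ∧ m ≠ n ∧
      ∀ p : Ideal R, p.IsMaximal → p = m ∨ p = n := by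
  have h₁ := RingHom.ker_isMaximal_of_surjective ((RingHom.fst K₁ K₂).comp f)
    (Prod.fst_surjective.comp hf)
  have h₂ := RingHom.ker_isMaximal_of_surjective ((RingHom.snd K₁ K₂).comp f)
    (Prod.snd_surjective.comp hf)
  obtain ⟨r, hr⟩ := hf (1, 0)
  refine ⟨_, _, h₁, h₂, fun heq => ?_, fun p hp => eq_or_eq_of_inf_le_jacobson_bot h₁ h₂ ?_ hp⟩
  · have hr₂ : r ∈ RingHom.ker ((RingHom.snd K₁ K₂).comp f) := by simp [RingHom.mem_ker, hr]
    rw [← heq] at hr₂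
    simp [RingHom.mem_ker, hr] at hr₂
  · rintro x ⟨hx₁, hx₂⟩
    exact hker (Prod.ext hx₁ hx₂)

end MaximalIdeals

/-- Theorem 3.2: for a non-local commutative ring `R`, the graph `Γ(R)` is bipartite iff
it is complete bipartite, iff `R` has exactly two maximal ideals, iff
`R/J(R) ≅ K₁ × K₂` for fields `K₁`, `K₂`. -/
theorem gamma_bipartite_tfae (R : Type u) [CommRing R] [Nontrivial R]
    (h : ¬IsLocalRing R) :
    (IsBipartiteGraph (Gamma R) ↔ IsCompleteBipartiteGraph (Gamma R)) ∧
    (IsCompleteBipartiteGraph (Gamma R) ↔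
      (∃ m n : Ideal R, m.IsMaximal ∧ n.IsMaximal ∧ m ≠ n ∧
        ∀ p : Ideal R, p.IsMaximal → p = m ∨ p = n)) ∧
    ((∃ m n : Ideal R, m.IsMaximal ∧ n.IsMaximal ∧ m ≠ n ∧
        ∀ p : Ideal R, p.IsMaximal → p = m ∨ p = n) ↔
      (∃ (K₁ K₂ : Type u) (_ : Field K₁) (_ : Field K₂),
        Nonempty ((R ⧸ (⊥ : Ideal R).jacobson) ≃+* (K₁ × K₂)))) := by
  have two_of_bipartite := exists_two_isMaximal_of_isBipartiteGraph_gamma h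
  have completeBipartite_of_two : (∃ m n : Ideal R, m.IsMaximal ∧ n.IsMaximal ∧ m ≠ n ∧
      ∀ p : Ideal R, p.IsMaximal → p = m ∨ p = n) → IsCompleteBipartiteGraph (Gamma R) :=
    fun ⟨_, _, hm, hn, _, honly⟩ => isCompleteBipartiteGraph_gamma_of_forall_isMaximal hm hn honly
  refine ⟨⟨fun hG => completeBipartite_of_two (two_of_bipartite hG),
      IsCompleteBipartiteGraph.isBipartiteGraph⟩,
    ⟨fun hG => two_of_bipartite hG.isBipartiteGraph, completeBipartite_of_two⟩, ?_, ?_⟩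
  · rintro ⟨m, n, hm, hn, hmn, honly⟩
    exact ⟨R ⧸ m, R ⧸ n, Ideal.Quotient.field m, Ideal.Quotient.field n,
      ⟨quotientJacobsonBotEquivProd hm hn hmn honly⟩⟩
  · rintro ⟨K₁, K₂, _, _, ⟨φ⟩⟩
    refine exists_two_isMaximal_of_surjective_prod (f := φ.toRingHom.comp (Ideal.Quotient.mk _))
      (φ.surjective.comp Ideal.Quotient.mk_surjective) ?_
    rw [RingHom.ker_comp_of_injective _ φ.injective, Ideal.mk_ker]
end

section
/- Let R be a commutative ring with identity. If a vertex x of the graph Γ(R) lies on a cycle of length five in Γ(R), then x lies on a cycle of length three or on a cycle of length four in Γ(R). -/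
universe u

/-!
Let `x - b₁ - b₂ - b₃ - b₄ - x` be the 5-cycle, `e = x`, and suppose `x` lies on no triangle and
no 4-cycle. Then `e` is the only nonunit comaximal with both `b₁` and `b₄`: any other `w` would
close the 4-cycle `x - b₁ - w - b₄ - x` (comaximality with `b₁` keeps `w` out of `J(R)`).
Applied to `e²` this makes `e` idempotent; applied to `y + e(1 - y)` it puts every `y` that is
not comaximal with `e` into `Re`. As no triangle passes through `x`, both `b₂` and `b₃` lie in
`Re`, so `Rb₂ + Rb₃ ⊆ Re ≠ R`, contradicting the edge `b₂ - b₃`.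
-/

open SimpleGraph

namespace SimpleGraph

variable {V : Type*} {G : SimpleGraph V} {x p q r : V}

lemma exists_isCycle_length_three (h₁ : G.Adj x p) (h₂ : G.Adj p q) (h₃ : G.Adj q x) :
    ∃ c : G.Walk x x, c.IsCycle ∧ c.length = 3 := by
  refine ⟨.cons h₁ (.cons h₂ (.cons h₃ .nil)), ?_, rfl⟩
  simp [Walk.isCycle_def, Walk.isTrail_def, h₁.ne, h₂.ne, h₃.ne, h₁.ne', h₃.ne']

lemma exists_isCycle_length_four (h₁ : G.Adj x p) (h₂ : G.Adj p q) (h₃ : G.Adj q r)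
    (h₄ : G.Adj r x) (hpr : p ≠ r) (hxq : x ≠ q) :
    ∃ c : G.Walk x x, c.IsCycle ∧ c.length = 4 := by
  refine ⟨.cons h₁ (.cons h₂ (.cons h₃ (.cons h₄ .nil))), ?_, rfl⟩
  simp [Walk.isCycle_def, Walk.isTrail_def, h₁.ne, h₂.ne, h₃.ne, h₄.ne, h₁.ne', h₄.ne', hpr, hxq,
    hxq.symm]

lemma Walk.IsCycle.exists_adj_of_length_eq_five {c : G.Walk x x} (hc : c.IsCycle)
    (hlen : c.length = 5) :
    ∃ b₁ b₂ b₃ b₄, G.Adj x b₁ ∧ G.Adj b₁ b₂ ∧ G.Adj b₂ b₃ ∧ G.Adj b₃ b₄ ∧ G.Adj b₄ x ∧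
      b₁ ≠ b₄ := by
  have hadj (i : ℕ) (hi : i < 5) := c.adj_getVert_succ (i := i) (by omega)
  have hne (i j : ℕ) (hi : 1 ≤ i ∧ i ≤ 5) (hj : 1 ≤ j ∧ j ≤ 5) (hij : i ≠ j) :
      c.getVert i ≠ c.getVert j :=
    fun h => hij (hc.getVert_injOn (by simpa [hlen]) (by simpa [hlen]) h)
  have hx : c.getVert 5 = x := hlen ▸ c.getVert_length
  refine ⟨c.getVert 1, c.getVert 2, c.getVert 3, c.getVert 4, ?_, hadj 1 (by norm_num),
    hadj 2 (by norm_num), hadj 3 (by norm_num), ?_,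
    hne 1 4 (by norm_num) (by norm_num) (by norm_num)⟩
  · simpa using hadj 0 (by norm_num)
  · simpa [hx] using hadj 4 (by norm_num)

end SimpleGraph

section Coprime

variable {R : Type*} [CommRing R] {e b c w y z : R}

lemma IsCoprime.notMem_jacobson_bot (h : IsCoprime w b) (hb : ¬IsUnit b) :
    w ∉ (⊥ : Ideal R).jacobson := by
  intro hw
  obtain ⟨u, v, huv⟩ := h
  have hunit : IsUnit (w * -u + 1) := Ideal.mem_jacobson_bot.1 hw (-u)
  rw [show w * -u + 1 = v * b by linear_combination -huv] at hunit
  exact hb (isUnit_of_mul_isUnit_right hunit)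

lemma isIdempotentElem_of_forall_isCoprime_eq (he : ¬IsUnit e) (heb : IsCoprime e b)
    (hec : IsCoprime e c) (huniq : ∀ w, ¬IsUnit w → IsCoprime w b → IsCoprime w c → w = e) :
    IsIdempotentElem e :=
  huniq (e * e) (fun h => he (isUnit_of_mul_isUnit_left h)) (heb.mul_left heb) (hec.mul_left hec)

lemma dvd_of_forall_isCoprime_eq (he : ¬IsUnit e) (heb : IsCoprime e b)
    (hec : IsCoprime e c) (huniq : ∀ w, ¬IsUnit w → IsCoprime w b → IsCoprime w c → w = e)
    (hy : ¬IsCoprime e y) : e ∣ y := by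
  have hidem : e * e = e := isIdempotentElem_of_forall_isCoprime_eq he heb hec huniq
  -- `w * e = e`, so `w` inherits the coprimality of `e`, while `w ≡ y` modulo `e`
  set w := y + e * (1 - y)
  have hwu : ¬IsUnit w := fun hu =>
    hy (IsCoprime.add_mul_left_right_iff.1 ((isCoprime_zero_left.2 hu).of_isCoprime_of_dvd_left
      (dvd_zero e)))
  have hwe : w * e = e := by linear_combination (1 - y) * hidem
  have hwb : IsCoprime w b := (hwe ▸ heb).of_mul_left_left
  have hwc : IsCoprime w c := (hwe ▸ hec).of_mul_left_left
  exact ⟨y, by linear_combination huniq w hwu hwb hwc⟩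

lemma not_isCoprime_of_forall_isCoprime_eq (he : ¬IsUnit e) (heb : IsCoprime e b)
    (hec : IsCoprime e c) (huniq : ∀ w, ¬IsUnit w → IsCoprime w b → IsCoprime w c → w = e)
    (hy : ¬IsCoprime e y) (hz : ¬IsCoprime e z) : ¬IsCoprime y z := fun hyz =>
  he (hyz.isUnit_of_dvd' (dvd_of_forall_isCoprime_eq he heb hec huniq hy)
    (dvd_of_forall_isCoprime_eq he heb hec huniq hz))

end Coprime

lemma Gamma.adj_iff_s8 {R : Type*} [CommRing R] {a b : GammaVert R} :
    (Gamma R).Adj a b ↔ IsCoprime a.1 b.1 := by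
  rw [← Ideal.isCoprime_span_singleton_iff, Ideal.isCoprime_iff_sup_eq]
  refine ⟨And.right, fun h => ⟨?_, h⟩⟩
  rintro rfl
  exact a.2.1 (isCoprime_self.1 ((Ideal.isCoprime_span_singleton_iff _ _).1
    (Ideal.isCoprime_iff_sup_eq.2 h)))

/-- Lemma 3.8: if a vertex `x` of `Γ(R)` lies on a cycle of length five, then it lies
on a triangle or on a rectangle. -/
theorem gamma_five_cycle {R : Type*} [CommRing R] (x : GammaVert R)
    (h : ∃ c : (Gamma R).Walk x x, c.IsCycle ∧ c.length = 5) :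
    ∃ c : (Gamma R).Walk x x, c.IsCycle ∧ (c.length = 3 ∨ c.length = 4) := by
  obtain ⟨c, hc, hlen⟩ := h
  obtain ⟨b₁, b₂, b₃, b₄, h₁, h₂, h₃, h₄, h₅, hb₁₄⟩ := hc.exists_adj_of_length_eq_five hlen
  by_contra hno
  have no_triangle {p q} (h₁ : (Gamma R).Adj x p) (h₂ : (Gamma R).Adj p q)
      (h₃ : (Gamma R).Adj q x) : False :=
    hno ((exists_isCycle_length_three h₁ h₂ h₃).imp fun _ ⟨hc, hl⟩ => ⟨hc, .inl hl⟩)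
  have no_square {p q r} (h₁ : (Gamma R).Adj x p) (h₂ : (Gamma R).Adj p q)
      (h₃ : (Gamma R).Adj q r) (h₄ : (Gamma R).Adj r x) (hpr : p ≠ r) (hxq : x ≠ q) : False :=
    hno ((exists_isCycle_length_four h₁ h₂ h₃ h₄ hpr hxq).imp fun _ ⟨hc, hl⟩ => ⟨hc, .inr hl⟩)
  refine not_isCoprime_of_forall_isCoprime_eq x.2.1 (Gamma.adj_iff_s8.1 h₁)
    (Gamma.adj_iff_s8.1 h₅.symm) ?_ ?_ ?_ (Gamma.adj_iff_s8.1 h₃)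
  · intro w hwu hwb₁ hwb₄
    by_contra hwx
    let v : GammaVert R := ⟨w, hwu, hwb₁.notMem_jacobson_bot b₁.2.1⟩
    exact no_square h₁ (Gamma.adj_iff_s8.2 hwb₁.symm) (q := v) (Gamma.adj_iff_s8.2 hwb₄) h₅ hb₁₄
      fun hxv => hwx (congrArg Subtype.val hxv).symm
  · exact fun hxb => no_triangle h₁ h₂ (Gamma.adj_iff_s8.2 hxb.symm)
  · exact fun hxb => no_triangle (Gamma.adj_iff_s8.2 hxb) h₄ h₅
end

section
/- Let R be a commutative ring with identity. The map x ↦ Rx induces a surjective graph homomorphism φ : Γ(R) → Γ_r(R), and there exists a graph homomorphism s : Γ_r(R) → Γ(R) with φ ∘ s equal to the identity on Γ_r(R); that is, Γ_r(R) is a retract of Γ(R). -/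
universe u

/-
The section chooses, for every principal ideal `Rx` in `Γ_r(R)`, one generator `x`; adjacency
is preserved in both directions because it only depends on the ideals `Rx`, `Ry`, and
distinct vertices stay distinct since a proper ideal is not comaximal with itself.
-/

section

variable {R : Type*} [CommRing R]

theorem GammaVert.span_ne_top (v : GammaVert R) : Ideal.span {v.1} ≠ ⊤ :=
  fun h => v.2.1 (Ideal.span_singleton_eq_top.mp h)

def GammaVert.toGammaRVert (v : GammaVert R) : GammaRVert R :=
  ⟨Ideal.span {v.1}, v.1, v.2.1, v.2.2, rfl⟩

variable (R) in
def Gamma.toGammaR : Gamma R →g GammaR R where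
  toFun := GammaVert.toGammaRVert
  map_rel' := by
    rintro a b ⟨-, hab⟩
    refine ⟨fun h => ?_, hab⟩
    have hspan : Ideal.span {a.1} = Ideal.span {b.1} := congrArg Subtype.val h
    rw [hspan, sup_idem] at hab
    exact b.span_ne_top hab

noncomputable def GammaRVert.generator (w : GammaRVert R) : GammaVert R :=
  ⟨w.2.choose, w.2.choose_spec.1, w.2.choose_spec.2.1⟩

theorem GammaRVert.span_generator (w : GammaRVert R) :
    Ideal.span {w.generator.1} = w.1 :=
  w.2.choose_spec.2.2.symm

theorem GammaRVert.toGammaRVert_generator (w : GammaRVert R) :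
    w.generator.toGammaRVert = w :=
  Subtype.ext w.span_generator

variable (R) in
noncomputable def GammaR.toGamma : GammaR R →g Gamma R where
  toFun := GammaRVert.generator
  map_rel' := by
    rintro a b ⟨hne, hab⟩
    refine ⟨fun h => hne ?_, ?_⟩
    · rw [← a.toGammaRVert_generator, ← b.toGammaRVert_generator, h]
    · rwa [a.span_generator, b.span_generator]

end

/-- Proposition 4.2(1): the map `x ↦ Rx` induces a surjective graph homomorphism
`φ : Γ(R) → Γ_r(R)` admitting a section `s` with `φ ∘ s = id`; i.e. `Γ_r(R)` is a
retract of `Γ(R)`. -/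
theorem gammaR_is_retract_of_gamma (R : Type*) [CommRing R] :
    ∃ (φ : Gamma R →g GammaR R) (s : GammaR R →g Gamma R),
      (∀ v : GammaVert R, (φ v).1 = Ideal.span {v.1}) ∧
      Function.Surjective φ ∧
      ∀ w : GammaRVert R, φ (s w) = w := by
  have hsection : Function.LeftInverse (Gamma.toGammaR R) (GammaR.toGamma R) :=
    GammaRVert.toGammaRVert_generator
  exact ⟨Gamma.toGammaR R, GammaR.toGamma R, fun _ => rfl, hsection.surjective, hsection⟩
end

section
/- Let R be a commutative ring with identity having infinitely many maximal ideals. Then for every natural number n, the graph Γ(R) contains a clique of size n; in particular, the clique number of Γ(R) is infinite. -/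
universe u

/-!
Given a finite set `S` of maximal ideals, pick a maximal ideal `M ∉ S` and, by induction, a clique
of `n` non-units of the co-maximal graph lying outside `M` and every member of `S`. Since `M` is
comaximal with each member of `S` and with each element of the clique, there is `x ∈ M` with
`x ≡ 1` modulo all of them; adding `x` gives a clique of size `n + 1` avoiding `S`. Avoiding a
single maximal ideal keeps the elements out of the Jacobson radical.
-/

open Finset

section

variable {R : Type*} [CommRing R]

lemma comaximalGraph_adj_of_sub_one_mem_span {x y : R} (hy : ¬IsUnit y)
    (h : x - 1 ∈ Ideal.span {y}) : (comaximalGraph R).Adj x y := by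
  have hone : (1 : R) ∈ Ideal.span {x} ⊔ Ideal.span {y} := by
    simpa using sub_mem (Ideal.mem_sup_left (Ideal.mem_span_singleton_self x))
      (Ideal.mem_sup_right h)
  refine ⟨?_, (Ideal.eq_top_iff_one _).2 hone⟩
  rintro rfl
  rw [sup_idem, ← Ideal.eq_top_iff_one, Ideal.span_singleton_eq_top] at hone
  exact hy hone

lemma Ideal.IsMaximal.isCoprime_span_singleton {M : Ideal R} (hM : M.IsMaximal) {y : R}
    (hy : y ∉ M) : IsCoprime M (Ideal.span {y}) := by
  obtain ⟨z, i, hi, hzi⟩ := hM.exists_inv hy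
  exact Ideal.isCoprime_iff_exists.2
    ⟨i, hi, z * y, Ideal.mul_mem_left _ _ (Ideal.mem_span_singleton_self y),
      by rw [← hzi, add_comm]⟩

theorem exists_comaximalGraph_isNClique_avoiding (hR : {I : Ideal R | I.IsMaximal}.Infinite)
    (n : ℕ) (S : Finset (Ideal R)) (hS : ∀ N ∈ S, N.IsMaximal) :
    ∃ s : Finset R, (comaximalGraph R).IsNClique n s ∧
      ∀ x ∈ s, ¬IsUnit x ∧ ∀ N ∈ S, x ∉ N := by
  classical
  induction n generalizing S with
  | zero => exact ⟨∅, by simp, by simp⟩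
  | succ n ih =>
    obtain ⟨M, hM, hMS⟩ : ∃ M : Ideal R, M.IsMaximal ∧ M ∉ S :=
      (hR.sdiff S.finite_toSet).nonempty
    obtain ⟨s, hs, hsS⟩ := ih (insert M S) (by simpa [hM] using hS)
    set A : Ideal R := ∏ N ∈ S, N
    set B : Ideal R := ∏ y ∈ s, Ideal.span {y}
    have hcop : IsCoprime M (A * B) := by
      refine .mul_right (.prod_right fun N hN => ?_) (.prod_right fun y hy => ?_)
      · exact Ideal.isCoprime_iff_sup_eq.2
          (hM.coprime_of_ne (hS N hN) (ne_of_mem_of_not_mem hN hMS).symm)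
      · exact hM.isCoprime_span_singleton ((hsS y hy).2 M (mem_insert_self M S))
    obtain ⟨x, hxM, q, hq, hxq⟩ := Ideal.isCoprime_iff_exists.1 hcop
    have hx1 : x - 1 = -q := by linear_combination hxq
    have hx1A : x - 1 ∈ A := by rw [hx1]; exact neg_mem (Ideal.mul_le_left (I := A) (J := B) hq)
    have hx1B : x - 1 ∈ B := by rw [hx1]; exact neg_mem (Ideal.mul_le_right (I := A) (J := B) hq)
    have hxu : ¬IsUnit x := fun hu => hM.ne_top (Ideal.eq_top_of_isUnit_mem _ hxM hu)
    have hxS : ∀ N ∈ S, x ∉ N := fun N hN hxN => by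
      have hx1N : x - 1 ∈ N := Ideal.prod_le_inf.trans (Finset.inf_le hN) hx1A
      exact (hS N hN).ne_top <| (Ideal.eq_top_iff_one _).2 <| by simpa using sub_mem hxN hx1N
    refine ⟨insert x s, hs.insert fun y hy => ?_, (forall_mem_insert _ _ _).2 ⟨⟨hxu, hxS⟩,
      fun y hy => ⟨(hsS y hy).1, fun N hN => (hsS y hy).2 N (mem_insert_of_mem hN)⟩⟩⟩
    exact comaximalGraph_adj_of_sub_one_mem_span (hsS y hy).1
      (Ideal.prod_le_inf.trans (Finset.inf_le hy) hx1B)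

lemma exists_gamma_isNClique_of_comaximalGraph {n : ℕ} {s : Finset R}
    (hs : (comaximalGraph R).IsNClique n s)
    (hv : ∀ x ∈ s, ¬IsUnit x ∧ x ∉ (⊥ : Ideal R).jacobson) :
    ∃ t : Finset (GammaVert R), (Gamma R).IsNClique n t := by
  classical
  refine ⟨s.subtype (fun x => ¬IsUnit x ∧ x ∉ (⊥ : Ideal R).jacobson), ?_, ?_⟩
  · intro a ha b hb hab
    exact ⟨hab, (hs.1 (mem_subtype.1 ha) (mem_subtype.1 hb) (Subtype.coe_ne_coe.2 hab)).2⟩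
  · have hcard : #(s.filter fun x => ¬IsUnit x ∧ x ∉ (⊥ : Ideal R).jacobson) = n := by
      rw [filter_true_of_mem hv, hs.2]
    exact (card_subtype _ s).trans hcard

end

/-- If `R` has infinitely many maximal ideals, then `Γ(R)` contains cliques of every
finite size; in particular its clique number is infinite. -/
theorem gamma_clique_of_infinitely_many_max (R : Type*) [CommRing R]
    (h : {I : Ideal R | I.IsMaximal}.Infinite) :
    ∀ n : ℕ, ∃ s : Finset (GammaVert R), (Gamma R).IsNClique n s := by
  intro n
  obtain ⟨M, hM⟩ := h.nonempty
  obtain ⟨s, hs, hsM⟩ := exists_comaximalGraph_isNClique_avoiding h n {M} (by simpa using hM)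
  refine exists_gamma_isNClique_of_comaximalGraph hs fun x hx => ⟨(hsM x hx).1, fun hJ => ?_⟩
  exact (hsM x hx).2 M (mem_singleton_self M) (Ideal.mem_sInf.1 hJ ⟨bot_le, hM⟩)
end

section
/- Let R be a commutative ring with identity and let G = Γ_r(R). Then the following are equivalent: (1) G has at least two vertices and there exists a vertex of G adjacent to every other vertex (G is a refinement of a star graph); (2) G is a star graph, i.e., G has at least two vertices, some vertex is adjacent to every other vertex, and the remaining vertices form an independent set; (3) R is isomorphic to F × T, where F is a field and T is a local ring. -/
universe u

/-!
If `Rc` is adjacent to every other vertex, then `Rc²`, being contained in `Rc` and hence not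
comaximal with it, is the vertex `Rc` itself; so `Rc = Re` for an idempotent `e`, and the
isomorphism `R ≅ R/Re × R/R(1-e)` carries `Rc` to `0 × B` with `B = R/R(1-e)`. In a product
`A × B` in which `0 × B` is adjacent to all other vertices, a nonzero nonunit `a` of `A` would
give the vertex `R(a, 1)`, and a nonunit `b ∉ J(B)` the vertex `R(0, b)`, neither comaximal with
`0 × B`; so `A` is a field and the nonunits of `B` lie in `J(B)`, i.e. `B` is local. Conversely,
in `F × T` every vertex other than `0 × T` is `F × I` with `I` inside the maximal ideal of `T`:
these are pairwise non-adjacent and all adjacent to `0 × T`.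
-/

namespace Ideal

variable {A B : Type*} [CommRing A] [CommRing B]

theorem span_singleton_prod (a : A) (b : B) :
    span {(a, b)} = (span {a}).prod (span {b}) := by
  rw [← span_prod (by simp), Set.singleton_prod_singleton]

theorem prod_sup_prod (I I' : Ideal A) (J J' : Ideal B) :
    I.prod J ⊔ I'.prod J' = (I ⊔ I').prod (J ⊔ J') := by
  simpa using ((idealProdEquiv (R := A) (S := B)).symm.map_sup (I, J) (I', J')).symm

theorem jacobson_bot_prod :
    jacobson (⊥ : Ideal (A × B)) = (jacobson ⊥).prod (jacobson ⊥) := by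
  ext x
  simp [mem_jacobson_bot, Prod.isUnit_iff, forall_and]

theorem one_notMem_jacobson_bot [Nontrivial A] : (1 : A) ∉ jacobson (⊥ : Ideal A) := fun h =>
  bot_ne_top (jacobson_eq_top_iff.mp ((eq_top_iff_one _).mpr h))

end Ideal

open Ideal

namespace IsIdempotentElem

variable {R : Type*} [CommRing R] {e : R} (he : IsIdempotentElem e)

noncomputable def ringEquivQuotientProd : R ≃+* (R ⧸ span {e}) × (R ⧸ span {1 - e}) :=
  have hcop : IsCoprime (span {e}) (span {1 - e}) :=
    (isCoprime_span_singleton_iff e (1 - e)).mpr ⟨1, 1, by ring⟩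
  have hbot : ⊥ = span {e} * span {1 - e} := by
    rw [span_singleton_mul_span_singleton, mul_sub, mul_one, he.eq, sub_self, span_singleton_zero]
  (RingEquiv.quotientBot R).symm.trans <|
    (quotEquivOfEq hbot).trans (quotientMulEquivQuotientProd _ _ hcop)

theorem ringEquivQuotientProd_apply (x : R) :
    he.ringEquivQuotientProd x = (Ideal.Quotient.mk _ x, Ideal.Quotient.mk _ x) := rfl

theorem ringEquivQuotientProd_self : he.ringEquivQuotientProd e = (0, 1) := by
  refine Prod.ext (Quotient.eq_zero_iff_mem.mpr (mem_span_singleton_self e)) ?_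
  rw [ringEquivQuotientProd_apply, ← map_one (Ideal.Quotient.mk _), Quotient.mk_eq_mk_iff_sub_mem]
  exact mem_span_singleton.mpr ⟨-1, by ring⟩

end IsIdempotentElem

namespace SimpleGraph

variable {V W : Type*} {G : SimpleGraph V} {G' : SimpleGraph W}

def IsStarCenter (G : SimpleGraph V) (c : V) : Prop :=
  G.IsUniversal c ∧ ∀ ⦃u v⦄, u ≠ c → v ≠ c → ¬G.Adj u v

theorem Iso.isUniversal_iff (f : G ≃g G') {v : V} : G'.IsUniversal (f v) ↔ G.IsUniversal v := by
  simp only [IsUniversal, f.surjective.forall, f.injective.ne_iff, f.map_adj_iff]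

theorem Iso.isStarCenter_iff (f : G ≃g G') {c : V} :
    G'.IsStarCenter (f c) ↔ G.IsStarCenter c := by
  simp only [IsStarCenter, f.isUniversal_iff, f.surjective.forall, f.injective.ne_iff,
    f.map_adj_iff]

end SimpleGraph

namespace GammaRVert

variable {R S : Type*} [CommRing R] [CommRing S]

def mk (x : R) (hu : ¬IsUnit x) (hj : x ∉ jacobson (⊥ : Ideal R)) : GammaRVert R :=
  ⟨span {x}, x, hu, hj, rfl⟩

theorem ne_top (v : GammaRVert R) : v.1 ≠ ⊤ := by
  obtain ⟨x, hu, -, hv⟩ := v.2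
  rwa [hv, Ne, span_singleton_eq_top]

theorem ne_bot (v : GammaRVert R) : v.1 ≠ ⊥ := by
  obtain ⟨x, -, hj, hv⟩ := v.2
  rw [hv, Ne, span_singleton_eq_bot]
  rintro rfl
  exact hj (zero_mem _)

theorem nontrivial_fst_of_coe_eq_bot_prod_top {A B : Type*} [CommRing A] [CommRing B]
    {c : GammaRVert (A × B)} (hcI : c.1 = (⊥ : Ideal A).prod ⊤) : Nontrivial A := by
  by_contra h
  rw [not_nontrivial_iff_subsingleton] at h
  exact c.ne_top (by rw [hcI, Subsingleton.elim (⊥ : Ideal A) ⊤, prod_top_top])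

theorem nontrivial_snd_of_coe_eq_bot_prod_top {A B : Type*} [CommRing A] [CommRing B]
    {c : GammaRVert (A × B)} (hcI : c.1 = (⊥ : Ideal A).prod ⊤) : Nontrivial B := by
  by_contra h
  rw [not_nontrivial_iff_subsingleton] at h
  exact c.ne_bot (by rw [hcI, Subsingleton.elim (⊤ : Ideal B) ⊥, prod_bot_bot])

theorem exists_map_eq_span_singleton (e : R ≃+* S) (v : GammaRVert R) :
    ∃ y : S, ¬IsUnit y ∧ y ∉ jacobson (⊥ : Ideal S) ∧ v.1.map e = span {y} := by
  obtain ⟨x, hu, hj, hv⟩ := v.2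
  refine ⟨e x, by rwa [isUnit_map_iff], ?_, by rw [hv, map_span, Set.image_singleton]⟩
  rwa [← map_bot (f := (e : R →+* S)), ← map_jacobson_of_bijective e.bijective,
    map_comap_of_equiv, mem_comap, RingEquiv.symm_apply_apply]

def map (e : R ≃+* S) (v : GammaRVert R) : GammaRVert S :=
  ⟨v.1.map e, exists_map_eq_span_singleton e v⟩

theorem coe_map (e : R ≃+* S) (v : GammaRVert R) : (map e v).1 = v.1.map e := rfl

theorem map_symm_map (e : R ≃+* S) (v : GammaRVert R) : map e.symm (map e v) = v :=
  Subtype.ext (map_of_equiv e)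

theorem map_map_symm (e : R ≃+* S) (w : GammaRVert S) : map e (map e.symm w) = w :=
  Subtype.ext <| by
    rw [coe_map, coe_map, ← comap_symm, comap_map_of_bijective _ e.symm.bijective]

end GammaRVert

namespace GammaR

def congr {R S : Type*} [CommRing R] [CommRing S] (e : R ≃+* S) : GammaR R ≃g GammaR S where
  toFun := GammaRVert.map e
  invFun := GammaRVert.map e.symm
  left_inv := GammaRVert.map_symm_map e
  right_inv := GammaRVert.map_map_symm e
  map_rel_iff' {u v} := by
    change (GammaRVert.map e u ≠ GammaRVert.map e v ∧ u.1.map e ⊔ v.1.map e = ⊤) ↔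
      (u ≠ v ∧ u.1 ⊔ v.1 = ⊤)
    rw [← Ideal.map_sup, map_eq_top_of_bijective _ e.bijective,
      (Function.LeftInverse.injective (GammaRVert.map_symm_map e)).ne_iff]

theorem coe_congr_apply {R S : Type*} [CommRing R] [CommRing S] (e : R ≃+* S)
    (v : GammaRVert R) : (congr e v).1 = v.1.map e := rfl

theorem sup_span_singleton_eq_top_of_isUniversal {R : Type*} [CommRing R] {c : GammaRVert R}
    (hc : (GammaR R).IsUniversal c) {x : R} (hu : ¬IsUnit x) (hj : x ∉ jacobson (⊥ : Ideal R))
    (hne : span {x} ≠ c.1) : c.1 ⊔ span {x} = ⊤ :=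
  (@hc (GammaRVert.mk x hu hj) fun h => hne (congrArg Subtype.val h).symm).2

theorem exists_isIdempotentElem_of_isUniversal {R : Type*} [CommRing R] {c : GammaRVert R}
    (hc : (GammaR R).IsUniversal c) : ∃ e : R, IsIdempotentElem e ∧ c.1 = span {e} := by
  obtain ⟨x, hu, hj, hcx⟩ := c.2
  have hsq : span {x * x} = c.1 := by
    by_contra hne
    have hle : span {x * x} ≤ c.1 :=
      hcx ▸ span_singleton_le_span_singleton.mpr (dvd_mul_right x x)
    refine c.ne_top ?_
    rw [← sup_eq_left.mpr hle]
    exact sup_span_singleton_eq_top_of_isUniversal hc (fun h => hu (isUnit_of_mul_isUnit_left h))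
      (fun h => hj (isRadical_jacobson ⊥ ⟨2, by rwa [sq]⟩)) hne
  have hidem : IsIdempotentElem c.1 := by
    rw [IsIdempotentElem, hcx, span_singleton_mul_span_singleton, ← hcx, hsq]
  exact (isIdempotentElem_iff_of_fg _ (hcx ▸ Submodule.fg_span_singleton x)).mp hidem

section Prod

variable {A B : Type*} [CommRing A] [CommRing B] {c : GammaRVert (A × B)}

theorem isField_fst_of_isUniversal (hc : (GammaR (A × B)).IsUniversal c)
    (hcI : c.1 = (⊥ : Ideal A).prod ⊤) : IsField A := by
  have := GammaRVert.nontrivial_fst_of_coe_eq_bot_prod_top hcI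
  have := GammaRVert.nontrivial_snd_of_coe_eq_bot_prod_top hcI
  refine ⟨exists_pair_ne A, mul_comm, fun {a} ha => ?_⟩
  by_contra hinv
  have hu : ¬IsUnit a := fun h => hinv h.exists_right_inv
  have key := sup_span_singleton_eq_top_of_isUniversal hc (x := (a, 1))
    (by simp [Prod.isUnit_iff, hu]) (by simp [jacobson_bot_prod, one_notMem_jacobson_bot])
    (by simp [hcI, span_singleton_prod, ha])
  rw [hcI, span_singleton_prod, prod_sup_prod] at key
  exact hu (by simpa [span_singleton_eq_top] using key)

theorem isLocalRing_snd_of_isUniversal (hc : (GammaR (A × B)).IsUniversal c)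
    (hcI : c.1 = (⊥ : Ideal A).prod ⊤) : IsLocalRing B := by
  have := GammaRVert.nontrivial_fst_of_coe_eq_bot_prod_top hcI
  have := GammaRVert.nontrivial_snd_of_coe_eq_bot_prod_top hcI
  refine IsLocalRing.of_isUnit_or_isUnit_one_sub_self fun b =>
    or_iff_not_imp_left.mpr fun hb => ?_
  have hbJ : b ∈ jacobson ⊥ := by
    by_contra hbJ
    have key := sup_span_singleton_eq_top_of_isUniversal hc (x := (0, b))
      (by simp [Prod.isUnit_iff]) (by simp [jacobson_bot_prod, hbJ])
      (by simp [hcI, span_singleton_prod, span_singleton_eq_top, hb])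
    rw [hcI, span_singleton_prod, prod_sup_prod] at key
    simp at key
  simpa [sub_eq_add_neg, add_comm] using mem_jacobson_bot.mp hbJ (-1)

end Prod

theorem exists_ringEquiv_prod_of_isUniversal {R : Type u} [CommRing R] {c : GammaRVert R}
    (hc : (GammaR R).IsUniversal c) :
    ∃ (F T : Type u) (_ : Field F) (_ : CommRing T),
      IsLocalRing T ∧ Nonempty (R ≃+* (F × T)) := by
  obtain ⟨e, he, hce⟩ := exists_isIdempotentElem_of_isUniversal hc
  let ψ := he.ringEquivQuotientProd
  have hc' : (GammaR _).IsUniversal (congr ψ c) := (congr ψ).isUniversal_iff.mpr hc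
  have hcI : (congr ψ c).1 = (⊥ : Ideal (R ⧸ span {e})).prod ⊤ := by
    rw [coe_congr_apply, hce, map_span, Set.image_singleton, he.ringEquivQuotientProd_self,
      span_singleton_prod, span_singleton_zero, span_singleton_one]
  let := (isField_fst_of_isUniversal hc' hcI).toField
  exact ⟨_, _, this, inferInstance, isLocalRing_snd_of_isUniversal hc' hcI, ⟨ψ⟩⟩

end GammaR
section FieldProdLocalRing

variable {F T : Type*} [Field F] [CommRing T] [IsLocalRing T]

theorem GammaRVert.exists_eq_top_prod_of_ne (v : GammaRVert (F × T))
    (hv : v.1 ≠ (⊥ : Ideal F).prod ⊤) :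
    ∃ I ≤ IsLocalRing.maximalIdeal T, v.1 = (⊤ : Ideal F).prod I := by
  obtain ⟨⟨a, b⟩, hu, hj, hvx⟩ := v.2
  rw [Prod.isUnit_iff] at hu
  simp only [jacobson_bot_prod, mem_prod, IsLocalRing.jacobson_eq_maximalIdeal ⊥ bot_ne_top,
    IsLocalRing.mem_maximalIdeal, mem_nonunits_iff] at hj
  rw [hvx, span_singleton_prod] at hv ⊢
  by_cases ha : IsUnit a
  · refine ⟨span {b}, (span_singleton_le_iff_mem _).mpr ?_, by rw [span_singleton_eq_top.mpr ha]⟩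
    exact (IsLocalRing.mem_maximalIdeal b).mpr fun hb => hu ⟨ha, hb⟩
  · have hb : IsUnit b := by tauto
    rw [isUnit_iff_ne_zero, not_not] at ha
    simp [ha, span_singleton_eq_top.mpr hb] at hv

theorem GammaR.exists_isStarCenter_prod :
    ∃ c : GammaRVert (F × T), (∃ v, v ≠ c) ∧ (GammaR (F × T)).IsStarCenter c := by
  let c := GammaRVert.mk ((0 : F), (1 : T)) (by simp [Prod.isUnit_iff])
    (by simp [jacobson_bot_prod, one_notMem_jacobson_bot])
  let v := GammaRVert.mk ((1 : F), (0 : T)) (by simp [Prod.isUnit_iff])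
    (by simp [jacobson_bot_prod, one_notMem_jacobson_bot])
  have hc : c.1 = (⊥ : Ideal F).prod ⊤ := by simp [c, GammaRVert.mk, span_singleton_prod]
  have hv : v.1 = (⊤ : Ideal F).prod ⊥ := by simp [v, GammaRVert.mk, span_singleton_prod]
  have hne (w : GammaRVert (F × T)) (hw : w ≠ c) : w.1 ≠ (⊥ : Ideal F).prod ⊤ :=
    fun h => hw (Subtype.ext (h.trans hc.symm))
  refine ⟨c, ⟨v, fun h => ?_⟩, fun w hw => ⟨hw, ?_⟩, fun u w hu hw huw => ?_⟩
  · simpa [hc, hv] using congrArg Subtype.val h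
  · obtain ⟨I, -, hI⟩ := w.exists_eq_top_prod_of_ne (hne w hw.symm)
    change c.1 ⊔ w.1 = ⊤
    simp [hc, hI, prod_sup_prod]
  · obtain ⟨I, hIm, hI⟩ := u.exists_eq_top_prod_of_ne (hne u hu)
    obtain ⟨J, hJm, hJ⟩ := w.exists_eq_top_prod_of_ne (hne w hw)
    have : I ⊔ J = ⊤ := by simpa [hI, hJ, prod_sup_prod] using huw.2
    exact (IsLocalRing.maximalIdeal.isMaximal T).ne_top (top_le_iff.mp (this ▸ sup_le hIm hJm))

theorem GammaR.exists_isStarCenter_of_ringEquiv_prod {R : Type*} [CommRing R] (e : R ≃+* F × T) :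
    ∃ c : GammaRVert R, (∃ v, v ≠ c) ∧ (GammaR R).IsStarCenter c := by
  obtain ⟨c, ⟨v, hv⟩, hc⟩ := GammaR.exists_isStarCenter_prod (F := F) (T := T)
  let f := GammaR.congr e
  refine ⟨f.symm c, ⟨f.symm v, f.symm.injective.ne hv⟩, f.isStarCenter_iff.mp ?_⟩
  rwa [f.apply_symm_apply]

end FieldProdLocalRing

/-- Proposition 4.6: for `G = Γ_r(R)`, `G` is a refinement of a star graph iff it is a
star graph, iff `R ≅ F × T` with `F` a field and `T` a local ring. -/
theorem gammaR_star_tfae (R : Type u) [CommRing R] :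
    (((∃ a b : GammaRVert R, a ≠ b) ∧
        ∃ c : GammaRVert R, ∀ v : GammaRVert R, v ≠ c → (GammaR R).Adj c v) ↔
      (∃ c : GammaRVert R, (∃ v : GammaRVert R, v ≠ c) ∧
        (∀ v : GammaRVert R, v ≠ c → (GammaR R).Adj c v) ∧
        ∀ u v : GammaRVert R, u ≠ c → v ≠ c → ¬(GammaR R).Adj u v)) ∧
    ((∃ c : GammaRVert R, (∃ v : GammaRVert R, v ≠ c) ∧
        (∀ v : GammaRVert R, v ≠ c → (GammaR R).Adj c v) ∧
        ∀ u v : GammaRVert R, u ≠ c → v ≠ c → ¬(GammaR R).Adj u v) ↔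
      (∃ (F T : Type u) (_ : Field F) (_ : CommRing T),
        IsLocalRing T ∧ Nonempty (R ≃+* (F × T)))) := by
  have prod_of_universal (c : GammaRVert R) (hc : ∀ v, v ≠ c → (GammaR R).Adj c v) :=
    GammaR.exists_ringEquiv_prod_of_isUniversal fun v hv => hc v hv.symm
  have star_of_prod : (∃ (F T : Type u) (_ : Field F) (_ : CommRing T),
      IsLocalRing T ∧ Nonempty (R ≃+* (F × T))) →
      ∃ c : GammaRVert R, (∃ v, v ≠ c) ∧ (∀ v, v ≠ c → (GammaR R).Adj c v) ∧
        ∀ u v, u ≠ c → v ≠ c → ¬(GammaR R).Adj u v := by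
    rintro ⟨F, T, _, _, _, ⟨e⟩⟩
    obtain ⟨c, hv, huniv, hind⟩ := GammaR.exists_isStarCenter_of_ringEquiv_prod e
    exact ⟨c, hv, fun v hv => huniv hv.symm, fun u v => @hind u v⟩
  exact ⟨⟨fun ⟨_, c, hc⟩ => star_of_prod (prod_of_universal c hc),
      fun ⟨c, ⟨v, hv⟩, hc, _⟩ => ⟨⟨v, c, hv⟩, c, hc⟩⟩,
    ⟨fun ⟨c, _, hc, _⟩ => prod_of_universal c hc, star_of_prod⟩⟩
end
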